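/- arXiv:1503.02615 — 3 statements merged into one kernel-verified Lean document; each statement's English description precedes it below -/
import Mathlib

section
/- Let M1 ∈ ℝ^{n1×n1}, M2 ∈ ℝ^{n2×n2}, Q ∈ ℝ^{n1×m}, P ∈ ℝ^{n2×m}, T1, T2 ∈ ℝ^{m×m}, vectors q ∈ ℝ^{n1}, p ∈ ℝ^{n2}, and scalars t1, t2 ∈ ℝ. Suppose the Arnoldi-type relations M1·Q = Q·T1 + t1·q·e_m^T and M2·P = P·T2 + t2·p·e_m^T hold, where e_m is the m-th standard basis vector of ℝ^m. Then (M2 ⊗ I_{n1} + I_{n2} ⊗ M1)(P ⊗ Q) = (P ⊗ Q)(T2 ⊗ I_m + I_m ⊗ T1) + (t2·p·e_m^T) ⊗ Q + P ⊗ (t1·q·e_m^T). -/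
open Matrix
open scoped Kronecker

/-! By the mixed-product rule `(A ⊗ B)(X ⊗ Y) = AX ⊗ BY`, each half of a Kronecker sum acts on only
one factor of `X ⊗ Y`, so the two Arnoldi relations can be substituted factor by factor. -/

namespace Matrix

variable {R l m n : Type*} [CommSemiring R]

theorem kroneckerSum_mul_kronecker [Fintype l] [Fintype m] [DecidableEq l] [DecidableEq m]
    (A : Matrix l l R) (B : Matrix m m R)
    (X : Matrix l n R) (Y : Matrix m n R) :
    (A ⊗ₖ (1 : Matrix m m R) + (1 : Matrix l l R) ⊗ₖ B) * (X ⊗ₖ Y) =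
      (A * X) ⊗ₖ Y + X ⊗ₖ (B * Y) := by
  rw [Matrix.add_mul, ← mul_kronecker_mul, ← mul_kronecker_mul, Matrix.one_mul, Matrix.one_mul]

theorem kronecker_mul_kroneckerSum [Fintype n] [DecidableEq n]
    (X : Matrix l n R) (Y : Matrix m n R) (S T : Matrix n n R) :
    (X ⊗ₖ Y) * (S ⊗ₖ (1 : Matrix n n R) + (1 : Matrix n n R) ⊗ₖ T) =
      (X * S) ⊗ₖ Y + X ⊗ₖ (Y * T) := by
  rw [Matrix.mul_add, ← mul_kronecker_mul, ← mul_kronecker_mul, Matrix.mul_one, Matrix.mul_one]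

theorem kroneckerSum_mul_kronecker_of_mul_eq [Fintype l] [Fintype m] [Fintype n]
    [DecidableEq l] [DecidableEq m] [DecidableEq n] {A : Matrix l l R} {B : Matrix m m R}
    {X : Matrix l n R} {Y : Matrix m n R} {S T : Matrix n n R}
    {E : Matrix l n R} {F : Matrix m n R}
    (hA : A * X = X * S + E) (hB : B * Y = Y * T + F) :
    (A ⊗ₖ (1 : Matrix m m R) + (1 : Matrix l l R) ⊗ₖ B) * (X ⊗ₖ Y) =
      (X ⊗ₖ Y) * (S ⊗ₖ (1 : Matrix n n R) + (1 : Matrix n n R) ⊗ₖ T) + E ⊗ₖ Y + X ⊗ₖ F := by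
  rw [kroneckerSum_mul_kronecker, kronecker_mul_kroneckerSum, hA, hB, add_kronecker,
    kronecker_add]
  abel

end Matrix

theorem kronecker_sum_arnoldi_relation_general {n1 n2 m : ℕ}
    (M1 : Matrix (Fin n1) (Fin n1) ℝ) (M2 : Matrix (Fin n2) (Fin n2) ℝ)
    (Q : Matrix (Fin n1) (Fin (m + 1)) ℝ) (P : Matrix (Fin n2) (Fin (m + 1)) ℝ)
    (T1 T2 : Matrix (Fin (m + 1)) (Fin (m + 1)) ℝ)
    (q : Fin n1 → ℝ) (p : Fin n2 → ℝ) (t1 t2 : ℝ)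
    (e : Fin (m + 1) → ℝ)
    (h1 : M1 * Q = Q * T1 + t1 • vecMulVec q e)
    (h2 : M2 * P = P * T2 + t2 • vecMulVec p e) :
    (M2 ⊗ₖ (1 : Matrix (Fin n1) (Fin n1) ℝ) + (1 : Matrix (Fin n2) (Fin n2) ℝ) ⊗ₖ M1) *
        (P ⊗ₖ Q) =
      (P ⊗ₖ Q) *
          (T2 ⊗ₖ (1 : Matrix (Fin (m + 1)) (Fin (m + 1)) ℝ) +
            (1 : Matrix (Fin (m + 1)) (Fin (m + 1)) ℝ) ⊗ₖ T1) +
        (t2 • vecMulVec p e) ⊗ₖ Q + P ⊗ₖ (t1 • vecMulVec q e) :=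
  kroneckerSum_mul_kronecker_of_mul_eq h2 h1

/-- Arnoldi-type relations for `M1, M2` imply the structured relation for
the Kronecker sum `M2 ⊗ I + I ⊗ M1` applied to `P ⊗ Q`. Here the approximation spaces have
dimension `m + 1`, and `e` is the last (i.e. `(m+1)`-st) standard basis vector of `ℝ^(m+1)`. -/
theorem kronecker_sum_arnoldi_relation {n1 n2 m : ℕ}
    (M1 : Matrix (Fin n1) (Fin n1) ℝ) (M2 : Matrix (Fin n2) (Fin n2) ℝ)
    (Q : Matrix (Fin n1) (Fin (m + 1)) ℝ) (P : Matrix (Fin n2) (Fin (m + 1)) ℝ)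
    (T1 T2 : Matrix (Fin (m + 1)) (Fin (m + 1)) ℝ)
    (q : Fin n1 → ℝ) (p : Fin n2 → ℝ) (t1 t2 : ℝ)
    (e : Fin (m + 1) → ℝ) (he : e = Pi.single (Fin.last m) 1)
    (h1 : M1 * Q = Q * T1 + t1 • vecMulVec q e)
    (h2 : M2 * P = P * T2 + t2 • vecMulVec p e) :
    (M2 ⊗ₖ (1 : Matrix (Fin n1) (Fin n1) ℝ) + (1 : Matrix (Fin n2) (Fin n2) ℝ) ⊗ₖ M1) *
        (P ⊗ₖ Q) =
      (P ⊗ₖ Q) *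
          (T2 ⊗ₖ (1 : Matrix (Fin (m + 1)) (Fin (m + 1)) ℝ) +
            (1 : Matrix (Fin (m + 1)) (Fin (m + 1)) ℝ) ⊗ₖ T1) +
        (t2 • vecMulVec p e) ⊗ₖ Q + P ⊗ₖ (t1 • vecMulVec q e) :=
  kronecker_sum_arnoldi_relation_general M1 M2 Q P T1 T2 q p t1 t2 e h1 h2
end

section
/- Let T1, T2 ∈ ℝ^{m×m}, Q ∈ ℝ^{n1×m}, P ∈ ℝ^{n2×m}, b1 ∈ ℝ^{n1}, b2 ∈ ℝ^{n2}. Then (P ⊗ Q) · exp(T2 ⊗ I_m + I_m ⊗ T1) · (P ⊗ Q)^T · vec(b1 b2^T) = vec( (Q exp(T1) Q^T b1) · (P exp(T2) P^T b2)^T ). In other words, the structured approximation x_m^⊗ to exp(𝒜)b is the vectorization of the rank-one outer product of the two separate Krylov approximations of exp(M1)b1 and exp(M2)b2. -/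
/-!
The two Kronecker summands `T₂ ⊗ I` and `I ⊗ T₁` commute, so the exponential of their sum
factors as `exp T₂ ⊗ exp T₁`. The whole left-hand side is then a product of three Kronecker
products applied to `vec (b₁ b₂ᵀ)`, and `(A ⊗ B) vec X = vec (B X Aᵀ)` keeps the rank-one
shape: each factor acts on `b₁` and `b₂` separately.
-/

open Matrix NormedSpace
open scoped Kronecker

/-- `vec` stacks the columns of a matrix one after the other: the entry of `vec X`
indexed by the pair (column index, row index) `(j, i)` is `X i j`. -/
def vec {n m : ℕ} (X : Matrix (Fin n) (Fin m) ℝ) : Fin m × Fin n → ℝ :=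
  fun p => X p.2 p.1

namespace Matrix

theorem mul_vecMulVec_mul_transpose {l m n p α : Type*} [Fintype m] [Fintype n] [CommSemiring α]
    (B : Matrix l m α) (A : Matrix p n α) (v : m → α) (w : n → α) :
    B * vecMulVec v w * Aᵀ = vecMulVec (B *ᵥ v) (A *ᵥ w) := by
  rw [mul_vecMulVec, vecMulVec_mul, vecMul_transpose]

theorem kronecker_mulVec_vec_vecMulVec {l m n p α : Type*} [Fintype m] [Fintype n]
    [CommSemiring α] (A : Matrix p n α) (B : Matrix l m α) (v : m → α) (w : n → α) :
    (A ⊗ₖ B) *ᵥ (vecMulVec v w).vec = (vecMulVec (B *ᵥ v) (A *ᵥ w)).vec := by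
  rw [kronecker_mulVec_vec, mul_vecMulVec_mul_transpose]

section Kronecker

variable {m n α : Type*} [Fintype m] [DecidableEq m] [Fintype n] [DecidableEq n]
  [CommSemiring α]

variable (n) in
def kroneckerOneRingHom : Matrix m m α →+* Matrix (m × n) (m × n) α where
  toFun A := A ⊗ₖ 1
  map_one' := one_kronecker_one
  map_mul' A B := by rw [← mul_kronecker_mul, one_mul]
  map_zero' := zero_kronecker _
  map_add' A B := add_kronecker A B _

variable (m) in
def oneKroneckerRingHom : Matrix n n α →+* Matrix (m × n) (m × n) α where
  toFun B := 1 ⊗ₖ B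
  map_one' := one_kronecker_one
  map_mul' A B := by rw [← mul_kronecker_mul, one_mul]
  map_zero' := kronecker_zero _
  map_add' A B := kronecker_add _ A B

theorem commute_kronecker_one_one_kronecker (A : Matrix m m α) (B : Matrix n n α) :
    Commute (A ⊗ₖ (1 : Matrix n n α)) ((1 : Matrix m m α) ⊗ₖ B) := by
  simp only [Commute, SemiconjBy, ← mul_kronecker_mul, one_mul, mul_one]

end Kronecker

section Exponential

variable {m n 𝔸 : Type*} [Fintype m] [DecidableEq m] [Fintype n] [DecidableEq n]
  [NormedCommRing 𝔸] [NormedAlgebra ℚ 𝔸] [CompleteSpace 𝔸]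

/-- `NormedSpace.map_exp` for matrix algebras, which carry no global norm instance. -/
theorem map_exp_of_continuous (f : Matrix m m 𝔸 →+* Matrix n n 𝔸) (hf : Continuous f)
    (A : Matrix m m 𝔸) : f (exp A) = exp (f A) := by
  -- the operator-norm uniformity is the product one, but not up to reducible unfolding
  open scoped Norms.Operator in
  · have : @CompleteSpace (Matrix m m 𝔸) PseudoMetricSpace.toUniformSpace :=
      Matrix.instCompleteSpace m m 𝔸
    exact NormedSpace.map_exp f hf A

theorem exp_kronecker_one (A : Matrix m m 𝔸) :
    exp (A ⊗ₖ (1 : Matrix n n 𝔸)) = exp A ⊗ₖ 1 :=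
  (map_exp_of_continuous (kroneckerOneRingHom n) (continuous_pi fun _ => continuous_pi fun _ =>
    (continuous_id.matrix_elem _ _).mul continuous_const) A).symm

theorem exp_one_kronecker (B : Matrix n n 𝔸) :
    exp ((1 : Matrix m m 𝔸) ⊗ₖ B) = 1 ⊗ₖ exp B :=
  (map_exp_of_continuous (oneKroneckerRingHom m) (continuous_pi fun _ => continuous_pi fun _ =>
    continuous_const.mul (continuous_id.matrix_elem _ _)) B).symm

theorem exp_kroneckerSum (A : Matrix m m 𝔸) (B : Matrix n n 𝔸) :
    exp (A ⊗ₖ (1 : Matrix n n 𝔸) + (1 : Matrix m m 𝔸) ⊗ₖ B) = exp A ⊗ₖ exp B := by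
  rw [exp_add_of_commute _ _ (commute_kronecker_one_one_kronecker A B), exp_kronecker_one,
    exp_one_kronecker, ← mul_kronecker_mul, mul_one, one_mul]

end Exponential

end Matrix

theorem vec_eq_matrix_vec {n m : ℕ} (X : Matrix (Fin n) (Fin m) ℝ) : _root_.vec X = X.vec :=
  rfl

/-- The structured approximation
`x_m^⊗ = (P ⊗ Q) exp(T2 ⊗ I_m + I_m ⊗ T1) (P ⊗ Q)ᵀ vec(b1 b2ᵀ)` equals the vectorization
of the rank-one outer product of the two separate approximations
`Q exp(T1) Qᵀ b1` and `P exp(T2) Pᵀ b2`. -/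
theorem structured_exp_approx_is_outer_product {n1 n2 m : ℕ}
    (T1 T2 : Matrix (Fin m) (Fin m) ℝ)
    (Q : Matrix (Fin n1) (Fin m) ℝ) (P : Matrix (Fin n2) (Fin m) ℝ)
    (b1 : Fin n1 → ℝ) (b2 : Fin n2 → ℝ) :
    (P ⊗ₖ Q) *ᵥ
        (NormedSpace.exp
            (T2 ⊗ₖ (1 : Matrix (Fin m) (Fin m) ℝ) +
              (1 : Matrix (Fin m) (Fin m) ℝ) ⊗ₖ T1) *ᵥ
          ((P ⊗ₖ Q)ᵀ *ᵥ _root_.vec (vecMulVec b1 b2))) =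
      _root_.vec (vecMulVec (Q *ᵥ (NormedSpace.exp T1 *ᵥ (Qᵀ *ᵥ b1)))
        (P *ᵥ (NormedSpace.exp T2 *ᵥ (Pᵀ *ᵥ b2)))) := by
  simp only [vec_eq_matrix_vec]
  rw [exp_kroneckerSum, ← kroneckerMap_transpose, kronecker_mulVec_vec_vecMulVec,
    kronecker_mulVec_vec_vecMulVec, kronecker_mulVec_vec_vecMulVec]
end

section
/- Let λ > 0, ρ > 0, γ ≥ 1/2 be real numbers and m a positive integer with m > γ. Let e : ℝ → ℝ be a measurable function with e(τ) ≥ 0 for τ > 0, and suppose: (a) e(τ) ≤ 10 (ρτ)^{-1} e^{−ρτ} (eρτ/m)^m for all 0 < τ ≤ m/(2ρ), and (b) e(τ) ≤ 10 e^{−m²/(5ρτ)} for all m/(2ρ) ≤ τ ≤ m²/(4ρ). Then ∫_0^{m²/(4ρ)} τ^{−γ} e^{−2λτ} e(τ) dτ ≤ 10 [ (1/ρ)(eρ/m)^m (2λ+ρ)^{γ−m} 𝛄(m−γ, (2λ+ρ)m/(2ρ)) + (2ρ/m)^{γ−1/2} √(π/(2λ)) e^{−2m√(2λ/(5ρ))}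 ], where 𝛄(s,x) = ∫_0^x t^{s−1} e^{−t} dt is the lower incomplete Gamma function. -/
/-!
Split the integral at `τ = m / (2ρ)`. Below that point bound (a) turns the integrand into
`C τ^{m-γ-1} e^{-(2λ+ρ)τ}`, whose integral over `(0, m/(2ρ)]` is a rescaled lower incomplete
Gamma function. Above it, bound (b) and `τ^{-γ} ≤ (2ρ/m)^{γ-1/2} τ^{-1/2}` reduce the integrand
to `τ^{-1/2} e^{-2λτ - β/τ}` with `β = m²/(5ρ)`, whose integral over `(0, ∞)` is computed exactly:
after `τ = t²` it becomes `e^{-2ac} ∫ e^{-(at - c/t)²} dt`, and averaging with its image under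
`t ↦ c/(at)` turns the weight into `(a + c/t²)/(2a)`, so that `u = at - c/t` gives the Gaussian
integral.
-/

open MeasureTheory Real Set

/-- The lower incomplete Gamma function `𝛄(s, x) = ∫_0^x t^{s-1} e^{-t} dt`. -/
noncomputable def lowerIncompleteGamma (s x : ℝ) : ℝ :=
  ∫ t in Set.Ioc (0 : ℝ) x, t ^ (s - 1) * Real.exp (-t)

theorem integral_Ioi_comp_div_smul {E : Type*} [NormedAddCommGroup E] [NormedSpace ℝ E]
    (f : ℝ → E) {k : ℝ} (hk : 0 < k) :
    ∫ x in Ioi 0, (k / x ^ 2) • f (k / x) = ∫ x in Ioi 0, f x := by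
  have himage : (k / ·) '' Ioi 0 = Ioi (0 : ℝ) := by
    refine (image_subset_iff.2 fun x hx => div_pos hk hx).antisymm fun y hy => ?_
    exact ⟨k / y, div_pos hk hy, div_div_cancel₀ hk.ne'⟩
  have hderiv : ∀ x ∈ Ioi (0 : ℝ), HasDerivWithinAt (k / ·) (-(k / x ^ 2)) (Ioi 0) x := by
    intro x hx
    refine (((hasDerivAt_const x k).div (hasDerivAt_id' x) (ne_of_gt hx)).congr_deriv
      ?_).hasDerivWithinAt
    ring
  have hinj : InjOn (k / ·) (Ioi (0 : ℝ)) := fun x _ y _ hxy =>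
    inv_injective (mul_left_cancel₀ hk.ne' hxy)
  conv_rhs =>
    rw [← himage, integral_image_eq_integral_abs_deriv_smul measurableSet_Ioi hderiv hinj]
  refine setIntegral_congr_fun measurableSet_Ioi fun x hx => ?_
  rw [abs_neg, abs_of_pos (div_pos hk (pow_pos hx 2))]

theorem integral_Ioi_exp_neg_sq_mul_sub_div {a c : ℝ} (ha : 0 < a) (hc : 0 < c) :
    ∫ t in Ioi 0, exp (-(a * t - c / t) ^ 2) = √π / (2 * a) := by
  set u : ℝ → ℝ := fun t => a * t - c / t
  set f : ℝ → ℝ := fun t => exp (-(u t) ^ 2)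
  have hu_deriv : ∀ t ∈ Ioi (0 : ℝ), HasDerivWithinAt u (a + c / t ^ 2) (Ioi 0) t := by
    intro t ht
    refine ((((hasDerivAt_id' t).const_mul a).sub ((hasDerivAt_const t c).div (hasDerivAt_id' t)
      (ne_of_gt ht))).congr_deriv ?_).hasDerivWithinAt
    field_simp; ring
  have hu_mono : StrictMonoOn u (Ioi 0) := by
    intro x hx y hy hxy
    have : c / y < c / x := div_lt_div_of_pos_left hc hx hxy
    have : a * x < a * y := mul_lt_mul_of_pos_left hxy ha
    simp only [u]; linarith
  -- `u t = y` is the quadratic equation `a t² - y t - c = 0`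
  have hu_surj : u '' Ioi 0 = univ := by
    refine eq_univ_of_forall fun y => ?_
    set s := √(y ^ 2 + 4 * a * c)
    have hs : s ^ 2 = y ^ 2 + 4 * a * c := sq_sqrt (by positivity)
    have hys : 0 < y + s := by nlinarith [sqrt_nonneg (y ^ 2 + 4 * a * c)]
    refine ⟨(y + s) / (2 * a), div_pos hys (by positivity), ?_⟩
    simp only [u]
    field_simp
    linear_combination hs
  have hw : ∫ t in Ioi 0, (a + c / t ^ 2) * f t = √π := by
    have := integral_image_eq_integral_abs_deriv_smul measurableSet_Ioi hu_deriv hu_mono.injOn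
      (fun y => exp (-y ^ 2))
    rw [hu_surj, Measure.restrict_univ] at this
    have hgauss : ∫ y, exp (-y ^ 2) = √π := by simpa using integral_gaussian 1
    rw [← hgauss, this]
    refine setIntegral_congr_fun measurableSet_Ioi fun t ht => ?_
    rw [smul_eq_mul, abs_of_pos (by have : (0 : ℝ) < t := ht; positivity)]
  have hw_int : IntegrableOn (fun t => (a + c / t ^ 2) * f t) (Ioi 0) :=
    Integrable.of_integral_ne_zero (by rw [hw]; positivity)
  have hf_int : IntegrableOn (fun t => a * f t) (Ioi 0) := by
    refine hw_int.mono' (by fun_prop) (ae_restrict_of_forall_mem measurableSet_Ioi fun t ht => ?_)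
    rw [norm_of_nonneg (by positivity)]
    gcongr
    exact le_add_of_nonneg_right (by positivity)
  -- the involution `t ↦ (c / a) / t` reverses the sign of `u`
  have hsymm : ∫ t in Ioi 0, (c / a / t ^ 2) * f t = ∫ t in Ioi 0, f t := by
    rw [← integral_Ioi_comp_div_smul f (div_pos hc ha)]
    refine setIntegral_congr_fun measurableSet_Ioi fun t ht => ?_
    have : u (c / a / t) = -u t := by
      simp only [u]; field_simp; ring
    simp only [f, smul_eq_mul, this, neg_sq]
  have hsplit : ∀ t ∈ Ioi (0 : ℝ),
      (a + c / t ^ 2) * f t = a * f t + a * (c / a / t ^ 2 * f t) := by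
    intro t _; field_simp
  have hrest_int : IntegrableOn (fun t => a * (c / a / t ^ 2 * f t)) (Ioi 0) :=
    (hw_int.sub hf_int).congr_fun (fun t _ => by simp only [Pi.sub_apply]; field_simp; ring)
      measurableSet_Ioi
  rw [setIntegral_congr_fun measurableSet_Ioi hsplit, integral_add hf_int hrest_int,
    integral_const_mul, integral_const_mul, hsymm] at hw
  rw [eq_div_iff (by positivity)]
  linarith

theorem integral_Ioi_rpow_neg_half_mul_exp_neg_mul_sub_div {β₁ β₂ : ℝ} (h₁ : 0 < β₁)
    (h₂ : 0 < β₂) :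
    ∫ x in Ioi 0, x ^ (-(1 / 2) : ℝ) * exp (-(β₁ * x) - β₂ / x) =
      √(π / β₁) * exp (-(2 * √(β₁ * β₂))) := by
  have hsq : ∀ t ∈ Ioi (0 : ℝ), (|2| * t ^ ((2 : ℝ) - 1)) •
      ((t ^ (2 : ℝ)) ^ (-(1 / 2) : ℝ) * exp (-(β₁ * t ^ (2 : ℝ)) - β₂ / t ^ (2 : ℝ))) =
      2 * exp (-(2 * √(β₁ * β₂))) * exp (-(√β₁ * t - √β₂ / t) ^ 2) := by
    intro t ht
    have ht : 0 < t := ht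
    have hpow : (t ^ (2 : ℝ)) ^ (-(1 / 2) : ℝ) = t⁻¹ := by
      rw [← rpow_mul ht.le]; norm_num [rpow_neg_one]
    have hexp : exp (-(β₁ * t ^ 2) - β₂ / t ^ 2) =
        exp (-(2 * (√β₁ * √β₂))) * exp (-(√β₁ * t - √β₂ / t) ^ 2) := by
      rw [← exp_add]
      congr 1
      field_simp
      linear_combination (t ^ 2) ^ 2 * sq_sqrt h₁.le + sq_sqrt h₂.le
    rw [hpow, rpow_two, sqrt_mul h₁.le, hexp, smul_eq_mul]
    norm_num
    field_simp
  rw [← integral_comp_rpow_Ioi _ two_ne_zero, setIntegral_congr_fun measurableSet_Ioi hsq,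
    integral_const_mul, integral_Ioi_exp_neg_sq_mul_sub_div (sqrt_pos.2 h₁) (sqrt_pos.2 h₂),
    sqrt_div' _ h₁.le]
  field_simp

theorem integral_Ioc_rpow_mul_exp_neg_mul (s : ℝ) {k c : ℝ} (hk : 0 < k) (hc : 0 ≤ c) :
    ∫ τ in Ioc 0 c, τ ^ (s - 1) * exp (-(k * τ)) = k ^ (-s) * lowerIncompleteGamma s (k * c) := by
  have hscale : ∀ τ ∈ Ioc (0 : ℝ) c,
      τ ^ (s - 1) * exp (-(k * τ)) = k ^ (1 - s) * ((k * τ) ^ (s - 1) * exp (-(k * τ))) := by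
    intro τ hτ
    rw [mul_rpow hk.le hτ.1.le, ← mul_assoc, ← mul_assoc, ← rpow_add hk]
    norm_num
  rw [setIntegral_congr_fun measurableSet_Ioc hscale, integral_const_mul,
    ← intervalIntegral.integral_of_le hc,
    intervalIntegral.integral_comp_mul_left (fun t => t ^ (s - 1) * exp (-t)) hk.ne',
    mul_zero, intervalIntegral.integral_of_le (by positivity), smul_eq_mul, ← mul_assoc,
    ← rpow_neg_one k, ← rpow_add hk, lowerIncompleteGamma]
  ring_nf

theorem rpow_neg_le_inv_rpow_mul_rpow_neg {c τ γ δ : ℝ} (hc : 0 < c) (hcτ : c ≤ τ) (hδγ : δ ≤ γ) :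
    τ ^ (-γ) ≤ c⁻¹ ^ (γ - δ) * τ ^ (-δ) := by
  have hτ : 0 < τ := hc.trans_le hcτ
  calc τ ^ (-γ) = τ⁻¹ ^ (γ - δ) * τ ^ (-δ) := by
        rw [inv_rpow hτ.le, ← rpow_neg hτ.le, ← rpow_add hτ]; ring_nf
    _ ≤ c⁻¹ ^ (γ - δ) * τ ^ (-δ) := by gcongr

theorem integrableOn_and_setIntegral_le_of_le {α : Type*} [MeasurableSpace α] {μ : Measure α}
    {f g : α → ℝ} {s t : Set α} (hs : MeasurableSet s) (ht : MeasurableSet t) (hst : s ⊆ t)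
    (hf : AEStronglyMeasurable f (μ.restrict s)) (hf0 : ∀ x ∈ s, 0 ≤ f x)
    (hfg : ∀ x ∈ s, f x ≤ g x) (hg : IntegrableOn g t μ) (hg0 : ∀ x ∈ t, 0 ≤ g x) :
    IntegrableOn f s μ ∧ ∫ x in s, f x ∂μ ≤ ∫ x in t, g x ∂μ := by
  have hgs : IntegrableOn g s μ := hg.mono_set hst
  refine ⟨hgs.mono' hf (ae_restrict_of_forall_mem hs fun x hx => ?_), ?_⟩
  · rw [norm_of_nonneg (hf0 x hx)]; exact hfg x hx
  · calc ∫ x in s, f x ∂μ ≤ ∫ x in s, g x ∂μ :=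
          integral_mono_of_nonneg (ae_restrict_of_forall_mem hs hf0) hgs
            (ae_restrict_of_forall_mem hs hfg)
      _ ≤ ∫ x in t, g x ∂μ :=
          setIntegral_mono_set hg (ae_restrict_of_forall_mem ht hg0) hst.eventuallyLE

noncomputable def weightedError (lam γ : ℝ) (e : ℝ → ℝ) (τ : ℝ) : ℝ :=
  τ ^ (-γ) * exp (-2 * lam * τ) * e τ

section WeightedError

variable {lam ρ γ : ℝ} {m : ℕ} {e : ℝ → ℝ} {s : Set ℝ}

theorem measurable_weightedError (he : Measurable e) : Measurable (weightedError lam γ e) := by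
  unfold weightedError; fun_prop

theorem weightedError_nonneg {τ : ℝ} (hτ : 0 < τ) (he : 0 ≤ e τ) :
    0 ≤ weightedError lam γ e τ := by
  unfold weightedError; positivity

theorem integrableOn_and_integral_weightedError_le_small_time (hlam : 0 ≤ lam) (hρ : 0 < ρ)
    (hmγ : γ < m) (he : Measurable e) (hs : MeasurableSet s) (hs_sub : s ⊆ Ioc 0 (m / (2 * ρ)))
    (he0 : ∀ τ ∈ s, 0 ≤ e τ)
    (ha : ∀ τ ∈ s, e τ ≤ 10 * (ρ * τ)⁻¹ * exp (-(ρ * τ)) * (exp 1 * ρ * τ / m) ^ m) :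
    IntegrableOn (weightedError lam γ e) s ∧
      ∫ τ in s, weightedError lam γ e τ ≤
        10 * (1 / ρ * (exp 1 * ρ / m) ^ m * (2 * lam + ρ) ^ (γ - m) *
          lowerIncompleteGamma (m - γ) ((2 * lam + ρ) * m / (2 * ρ))) := by
  set C := 10 * ρ⁻¹ * (exp 1 * ρ / m) ^ m
  set g : ℝ → ℝ := fun τ => C * (τ ^ ((m - γ : ℝ) - 1) * exp (-((2 * lam + ρ) * τ)))
  have hk : 0 < 2 * lam + ρ := by positivity
  have hg_int : IntegrableOn g (Ioc 0 (m / (2 * ρ))) := by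
    have : IntegrableOn (fun τ : ℝ => τ ^ ((m - γ : ℝ) - 1) * exp (-((2 * lam + ρ) * τ)))
        (Ioi 0) := by
      simpa only [rpow_one, neg_mul] using integrableOn_rpow_mul_exp_neg_mul_rpow (p := 1)
        (s := (m - γ : ℝ) - 1) (by linarith) one_pos hk
    exact IntegrableOn.mono_set (this.const_mul C) Ioc_subset_Ioi_self
  have hbound : ∀ τ ∈ s, weightedError lam γ e τ ≤ g τ := by
    intro τ hτ
    have hτ0 : 0 < τ := (hs_sub hτ).1
    calc weightedError lam γ e τ ≤ τ ^ (-γ) * exp (-2 * lam * τ) *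
          (10 * (ρ * τ)⁻¹ * exp (-(ρ * τ)) * (exp 1 * ρ * τ / m) ^ m) := by
          unfold weightedError; gcongr; exact ha τ hτ
      _ = g τ := by
        simp only [g, C, div_pow, mul_pow, mul_inv, rpow_sub hτ0, rpow_neg hτ0.le, rpow_one,
          rpow_natCast, neg_mul]
        field_simp
        rw [← exp_add]; ring_nf
  obtain ⟨hint, hle⟩ := integrableOn_and_setIntegral_le_of_le hs measurableSet_Ioc hs_sub
    (measurable_weightedError he).aestronglyMeasurable
    (fun τ hτ => weightedError_nonneg (hs_sub hτ).1 (he0 τ hτ)) hbound hg_int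
    (fun τ hτ => by have := hτ.1; positivity)
  refine ⟨hint, hle.trans_eq ?_⟩
  rw [integral_const_mul, integral_Ioc_rpow_mul_exp_neg_mul _ hk (by positivity)]
  simp only [C]; ring_nf

theorem integrableOn_and_integral_weightedError_le_large_time (hlam : 0 < lam) (hρ : 0 < ρ)
    (hγ : 1 / 2 ≤ γ) (hm : 0 < m) (he : Measurable e) (hs : MeasurableSet s)
    (hs_sub : s ⊆ Ioi (m / (2 * ρ))) (he0 : ∀ τ ∈ s, 0 ≤ e τ)
    (hb : ∀ τ ∈ s, e τ ≤ 10 * exp (-((m : ℝ) ^ 2 / (5 * ρ * τ)))) :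
    IntegrableOn (weightedError lam γ e) s ∧
      ∫ τ in s, weightedError lam γ e τ ≤
        10 * ((2 * ρ / m) ^ (γ - 1 / 2) * √(π / (2 * lam)) *
          exp (-(2 * m * √(2 * lam / (5 * ρ))))) := by
  have hc : (0 : ℝ) < m / (2 * ρ) := by positivity
  set β := (m : ℝ) ^ 2 / (5 * ρ)
  set C := 10 * (2 * ρ / m) ^ (γ - 1 / 2)
  set g : ℝ → ℝ := fun τ => C * (τ ^ (-(1 / 2) : ℝ) * exp (-(2 * lam * τ) - β / τ))
  have hg_eq : ∫ τ in Ioi 0, g τ = C * (√(π / (2 * lam)) * exp (-(2 * √(2 * lam * β)))) := by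
    rw [integral_const_mul, integral_Ioi_rpow_neg_half_mul_exp_neg_mul_sub_div (by positivity)
      (by positivity)]
  have hg_int : IntegrableOn g (Ioi 0) :=
    Integrable.of_integral_ne_zero (by rw [hg_eq]; positivity)
  have hbound : ∀ τ ∈ s, weightedError lam γ e τ ≤ g τ := by
    intro τ hτ
    have hτ0 : 0 < τ := hc.trans (hs_sub hτ)
    have hpow := rpow_neg_le_inv_rpow_mul_rpow_neg hc (hs_sub hτ).le hγ
    rw [inv_div] at hpow
    calc weightedError lam γ e τ ≤ τ ^ (-γ) * exp (-2 * lam * τ) *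
          (10 * exp (-((m : ℝ) ^ 2 / (5 * ρ * τ)))) := by
          unfold weightedError; gcongr; exact hb τ hτ
      _ = 10 * (τ ^ (-γ) * exp (-(2 * lam * τ) - β / τ)) := by
        rw [sub_eq_add_neg, exp_add, div_div]; ring_nf
      _ ≤ 10 * ((2 * ρ / m) ^ (γ - 1 / 2) * τ ^ (-(1 / 2) : ℝ) *
          exp (-(2 * lam * τ) - β / τ)) := by
        gcongr
      _ = g τ := by ring
  obtain ⟨hint, hle⟩ := integrableOn_and_setIntegral_le_of_le hs measurableSet_Ioi
    (hs_sub.trans (Ioi_subset_Ioi hc.le)) (measurable_weightedError he).aestronglyMeasurable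
    (fun τ hτ => weightedError_nonneg (hc.trans (hs_sub hτ)) (he0 τ hτ)) hbound hg_int
    (fun τ hτ => by have : 0 < τ := hτ; positivity)
  refine ⟨hint, hle.trans_eq ?_⟩
  have hsqrt : √(2 * lam * β) = m * √(2 * lam / (5 * ρ)) := by
    rw [show 2 * lam * β = (m : ℝ) ^ 2 * (2 * lam / (5 * ρ)) by ring, sqrt_mul (by positivity),
      sqrt_sq (Nat.cast_nonneg m)]
  rw [hg_eq, hsqrt, ← mul_assoc 2]
  ring

end WeightedError

/-- Lemmas 5.3–5.4 of the paper combined. Under the Hochbruck–Lubich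
type bounds (a) and (b) on the error function `e`, the weighted integral
`∫_0^{m²/(4ρ)} τ^{−γ} e^{−2λτ} e(τ) dτ` admits the stated explicit bound involving the
lower incomplete Gamma function. -/
theorem weighted_error_integral_bound
    (lam ρ γ : ℝ) (hlam : 0 < lam) (hρ : 0 < ρ) (hγ : 1 / 2 ≤ γ)
    (m : ℕ) (hm : 0 < m) (hmγ : γ < m)
    (e : ℝ → ℝ) (he_meas : Measurable e) (he_nonneg : ∀ τ : ℝ, 0 < τ → 0 ≤ e τ)
    (ha : ∀ τ : ℝ, 0 < τ → τ ≤ (m : ℝ) / (2 * ρ) →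
      e τ ≤ 10 * (ρ * τ)⁻¹ * Real.exp (-(ρ * τ)) * (Real.exp 1 * ρ * τ / m) ^ (m : ℕ))
    (hb : ∀ τ : ℝ, (m : ℝ) / (2 * ρ) ≤ τ → τ ≤ (m : ℝ) ^ 2 / (4 * ρ) →
      e τ ≤ 10 * Real.exp (-((m : ℝ) ^ 2 / (5 * ρ * τ)))) :
    ∫ τ in Set.Ioc (0 : ℝ) ((m : ℝ) ^ 2 / (4 * ρ)),
        τ ^ (-γ) * Real.exp (-2 * lam * τ) * e τ ≤
      10 *
        (1 / ρ * (Real.exp 1 * ρ / m) ^ (m : ℕ) * (2 * lam + ρ) ^ (γ - (m : ℝ)) *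
            lowerIncompleteGamma ((m : ℝ) - γ) ((2 * lam + ρ) * m / (2 * ρ)) +
          (2 * ρ / m) ^ (γ - 1 / 2) * Real.sqrt (Real.pi / (2 * lam)) *
            Real.exp (-(2 * m * Real.sqrt (2 * lam / (5 * ρ))))) := by
  set T := (m : ℝ) ^ 2 / (4 * ρ)
  set c := (m : ℝ) / (2 * ρ)
  have hsmall : Ioc 0 T ∩ Iic c ⊆ Ioc 0 c := fun τ hτ => ⟨hτ.1.1, hτ.2⟩
  have hlarge : Ioc 0 T \ Iic c ⊆ Ioi c := fun τ hτ => mem_Ioi.2 (not_le.1 hτ.2)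
  obtain ⟨hint₁, hle₁⟩ := integrableOn_and_integral_weightedError_le_small_time hlam.le hρ hmγ
    he_meas (measurableSet_Ioc.inter measurableSet_Iic) hsmall
    (fun τ hτ => he_nonneg τ hτ.1.1) (fun τ hτ => ha τ hτ.1.1 hτ.2)
  obtain ⟨hint₂, hle₂⟩ := integrableOn_and_integral_weightedError_le_large_time hlam hρ hγ hm
    he_meas (measurableSet_Ioc.diff measurableSet_Iic) hlarge
    (fun τ hτ => he_nonneg τ hτ.1.1) (fun τ hτ => hb τ (hlarge hτ).le hτ.1.2)
  change ∫ τ in Ioc 0 T, weightedError lam γ e τ ≤ _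
  rw [← inter_union_sdiff (Ioc 0 T) (Iic c), setIntegral_union disjoint_sdiff_inter.symm
    (measurableSet_Ioc.diff measurableSet_Iic) hint₁ hint₂, mul_add]
  exact add_le_add hle₁ hle₂
end
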